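/- arXiv:2306.09450 — 3 statements merged into one kernel-verified Lean document; each statement's English description precedes it below -/
import Mathlib

section
/- For integers j, k, d with 0 ≤ j ≤ k-1 ≤ d, we have Σ_{ℓ=j}^{k-1} (-1)^{ℓ+1-j} C(d-ℓ, k-ℓ) C(d-j, ℓ-j) = (-1)^{k-j} C(d-j, k-j). -/
/-!
With `n = k - j`, `D = d - j` and `m = ℓ - j`, the identity `C(D-m, n-m) C(D, m) = C(D, n) C(n, m)`
pulls `C(D, n)` out of the sum. What is left is the alternating sum of `C(n, m)` over `m < n`,
which is `(-1)^n` because the full alternating sum of the `n`-th row vanishes.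
-/

open Finset

theorem sum_range_neg_one_pow_succ_mul_choose {n : ℕ} (hn : n ≠ 0) :
    ∑ m ∈ range n, (-1 : ℤ) ^ (m + 1) * (n.choose m : ℤ) = (-1) ^ n := by
  obtain ⟨n, rfl⟩ := Nat.exists_eq_succ_of_ne_zero hn
  have h := Int.alternating_sum_range_choose_eq_choose (n := n) (m := n)
  rw [Nat.choose_self, Nat.cast_one, mul_one] at h
  simp only [pow_succ, mul_neg_one, neg_mul, sum_neg_distrib, h]

theorem sum_range_neg_one_pow_succ_mul_choose_sub_mul_choose (D : ℕ) {n : ℕ} (hn : n ≠ 0) :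
    ∑ m ∈ range n, (-1 : ℤ) ^ (m + 1) * ((D - m).choose (n - m) : ℤ) * (D.choose m : ℤ)
      = (-1) ^ n * (D.choose n : ℤ) := by
  calc _ = ∑ m ∈ range n, (D.choose n : ℤ) * ((-1) ^ (m + 1) * (n.choose m : ℤ)) := by
          refine sum_congr rfl fun m hm => ?_
          have h : (D.choose n * n.choose m : ℤ) = D.choose m * (D - m).choose (n - m) := by
            exact_mod_cast Nat.choose_mul (le_of_lt (mem_range.mp hm))
          linear_combination -(-1 : ℤ) ^ (m + 1) * h
    _ = (-1) ^ n * (D.choose n : ℤ) := by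
          rw [← mul_sum, sum_range_neg_one_pow_succ_mul_choose hn, mul_comm]

theorem stmt_2_general (j k d : ℕ) (hjk : j ≤ k - 1) (hk : 1 ≤ k) :
    ∑ ℓ ∈ Finset.Icc j (k - 1),
      (-1 : ℤ) ^ (ℓ + 1 - j) * ((d - ℓ).choose (k - ℓ) : ℤ) * ((d - j).choose (ℓ - j) : ℤ)
      = (-1 : ℤ) ^ (k - j) * ((d - j).choose (k - j) : ℤ) := by
  have hk_not_min : ¬IsMin k := by simp only [isMin_iff_eq_bot, Nat.bot_eq_zero]; omega
  rw [Icc_sub_one_right_eq_Ico_of_not_isMin hk_not_min, sum_Ico_eq_sum_range,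
    ← sum_range_neg_one_pow_succ_mul_choose_sub_mul_choose (d - j) (n := k - j) (by omega)]
  refine sum_congr rfl fun m hm => ?_
  have hm : m < k - j := mem_range.mp hm
  rw [show j + m + 1 - j = m + 1 by omega, show d - (j + m) = d - j - m by omega,
    show k - (j + m) = k - j - m by omega, Nat.add_sub_cancel_left]

/-- For `0 ≤ j ≤ k-1 ≤ d`:
`∑_{ℓ=j}^{k-1} (-1)^{ℓ+1-j} C(d-ℓ, k-ℓ) C(d-j, ℓ-j) = (-1)^{k-j} C(d-j, k-j)`. -/
theorem stmt_2 (j k d : ℕ) (hjk : j ≤ k - 1) (hkd : k - 1 ≤ d) (hk : 1 ≤ k) :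
    ∑ ℓ ∈ Finset.Icc j (k - 1),
      (-1 : ℤ) ^ (ℓ + 1 - j) * ((d - ℓ).choose (k - ℓ) : ℤ) * ((d - j).choose (ℓ - j) : ℤ)
      = (-1 : ℤ) ^ (k - j) * ((d - j).choose (k - j) : ℤ) :=
  stmt_2_general j k d hjk hk
end

section
/- For all integers m ≥ 1 and q ≥ 2, E(m,q,2,mq+m+q) = Σ_{j=0}^{2} (-1)^{2-j} C(q-j, 2-j) C(mq+m+q, m+j) ≥ 0. -/
open Finset

/-- `E(m,q,t,n) = ∑_{j=0}^{t} (-1)^{t-j} C(q-j, t-j) C(n, m+j)`. -/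
def E (m q t n : ℕ) : ℤ :=
  ∑ j ∈ Finset.range (t + 1),
    (-1 : ℤ) ^ (t - j) * ((q - j).choose (t - j) : ℤ) * (n.choose (m + j) : ℤ)

lemma two_mul_choose_two (q : ℕ) : 2 * q.choose 2 = q * (q - 1) := by
  cases q with
  | zero => simp
  | succ s =>
    rw [Nat.choose_two_right]
    have h : 2 ∣ (s + 1) * s := by
      rw [mul_comm]; exact (Nat.even_mul_succ_self s).two_dvd
    simp only [Nat.succ_sub_one]
    omega

/-- For `m ≥ 1` and `q ≥ 2`: `E(m,q,2,mq+m+q) ≥ 0`. -/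
theorem stmt_16 (m q : ℕ) (hm : 1 ≤ m) (hq : 2 ≤ q) :
    0 ≤ E m q 2 (m * q + m + q) := by
  set n := m * q + m + q with hn
  set a : ℤ := (n.choose m : ℤ) with ha
  set b : ℤ := (n.choose (m + 1) : ℤ) with hb
  set c : ℤ := (n.choose (m + 2) : ℤ) with hc
  -- ratio identities
  have e1 : n.choose (m + 1) * (m + 1) = n.choose m * (m * q + q) := by
    have := Nat.choose_succ_right_eq n m
    have hsub : n - m = m * q + q := by omega
    rw [hsub] at this
    exact this
  have e2 : n.choose (m + 2) * (m + 2) = n.choose (m + 1) * (m * q + q - 1) := by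
    have := Nat.choose_succ_right_eq n (m + 1)
    have hsub : n - (m + 1) = m * q + q - 1 := by
      have : 0 < m * q := Nat.mul_pos (by omega) (by omega)
      omega
    rw [hsub] at this
    exact this
  have hb1 : b * (m + 1) = a * (m * q + q) := by
    rw [ha, hb]; exact_mod_cast e1
  have hc1 : c * (m + 2) = b * ((m : ℤ) * q + q - 1) := by
    have h1 : 1 ≤ m * q + q := by omega
    have : (((m * q + q - 1 : ℕ)) : ℤ) = (m : ℤ) * q + q - 1 := by
      push_cast [Nat.cast_sub h1]; ring
    calc c * (m + 2) = ((n.choose (m + 2) * (m + 2) : ℕ) : ℤ) := by push_cast; ring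
      _ = ((n.choose (m + 1) * (m * q + q - 1) : ℕ) : ℤ) := by rw [e2]
      _ = b * ((m : ℤ) * q + q - 1) := by push_cast [Nat.cast_sub h1]; ring
  have hC2 : 2 * (q.choose 2 : ℤ) = q * ((q : ℤ) - 1) := by
    have := two_mul_choose_two q
    have hq1 : 1 ≤ q := by omega
    calc 2 * (q.choose 2 : ℤ) = ((2 * q.choose 2 : ℕ) : ℤ) := by push_cast; ring
      _ = ((q * (q - 1) : ℕ) : ℤ) := by rw [this]
      _ = q * ((q : ℤ) - 1) := by push_cast [Nat.cast_sub hq1]; ring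
  -- unfold E
  have hE : E m q 2 n = (q.choose 2 : ℤ) * a - ((q : ℤ) - 1) * b + c := by
    have hq1 : 1 ≤ q := by omega
    simp only [E, Finset.sum_range_succ, Finset.sum_range_zero]
    norm_num [Nat.choose_one_right]
    rw [Nat.cast_sub hq1]
    push_cast
    ring
  rw [hE]
  have ha0 : 0 ≤ a := by positivity
  have key : 2 * ((m : ℤ) + 1) * ((m : ℤ) + 2) *
      ((q.choose 2 : ℤ) * a - ((q : ℤ) - 1) * b + c)
      = a * ((m : ℤ) + 1) * q * m * ((q : ℤ) + 1) := by
    linear_combination ((m : ℤ) + 1) * ((m : ℤ) + 2) * a * hC2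
      + 2 * ((m : ℤ) - (q : ℤ) + 1) * hb1 + 2 * ((m : ℤ) + 1) * hc1
  have hr : 0 ≤ a * ((m : ℤ) + 1) * q * m * ((q : ℤ) + 1) := by positivity
  have h2 : (0 : ℤ) < 2 * ((m : ℤ) + 1) * ((m : ℤ) + 2) := by positivity
  have := key ▸ hr
  exact (mul_nonneg_iff_of_pos_left h2).mp this
end

section
/- For all integers m ≥ 1 and q ≥ 3, E(m,q,3,mq+m+q) = Σ_{j=0}^{3} (-1)^{3-j} C(q-j, 3-j) C(mq+m+q, m+j) ≥ 0. -/
open Finset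

lemma six_choose_three (r : ℕ) : 6 * ((r + 3).choose 3) = (r + 3) * (r + 2) * (r + 1) := by
  have h := Nat.choose_mul_factorial_mul_factorial (show 3 ≤ r + 3 by omega)
  have h2 : Nat.factorial (r + 3) = (r + 3) * (r + 2) * (r + 1) * Nat.factorial r := by
    simp [Nat.factorial_succ]; ring
  rw [show r + 3 - 3 = r from by omega, show Nat.factorial 3 = 6 from rfl, h2] at h
  exact Nat.eq_of_mul_eq_mul_right (Nat.factorial_pos r) (by linarith [h])

lemma two_choose_two (r : ℕ) : 2 * ((r + 2).choose 2) = (r + 2) * (r + 1) := by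
  have h := Nat.choose_mul_factorial_mul_factorial (show 2 ≤ r + 2 by omega)
  have h2 : Nat.factorial (r + 2) = (r + 2) * (r + 1) * Nat.factorial r := by
    simp [Nat.factorial_succ]; ring
  rw [show r + 2 - 2 = r from by omega, show Nat.factorial 2 = 2 from rfl, h2] at h
  exact Nat.eq_of_mul_eq_mul_right (Nat.factorial_pos r) (by linarith [h])

lemma aux_stmt (s r : ℕ) :
    0 ≤ E (s + 1) (r + 3) 3 ((s + 1) * (r + 3) + (s + 1) + (r + 3)) := by
  obtain ⟨n, hn⟩ : ∃ n, n = (s + 1) * (r + 3) + (s + 1) + (r + 3) := ⟨_, rfl⟩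
  rw [← hn]
  obtain ⟨P, hPdef⟩ : ∃ P, P = (r + 3) * (s + 2) := ⟨_, rfl⟩
  have hnP : n = P + (s + 1) := by rw [hn, hPdef]; ring
  have hP6 : 6 ≤ P := by
    rw [hPdef]; exact Nat.mul_le_mul (show 3 ≤ r + 3 by omega) (show 2 ≤ s + 2 by omega)
  have h1 := Nat.choose_succ_right_eq n (s + 1)
  have h2 := Nat.choose_succ_right_eq n (s + 2)
  have h3 := Nat.choose_succ_right_eq n (s + 3)
  rw [show n - (s + 1) = P from by omega] at h1
  rw [show s + 1 + 1 = s + 2 from rfl] at h1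
  rw [show n - (s + 2) = P - 1 from by omega, show s + 2 + 1 = s + 3 from rfl] at h2
  rw [show n - (s + 3) = P - 2 from by omega, show s + 3 + 1 = s + 4 from rfl] at h3
  set a : ℤ := (n.choose (s + 1) : ℤ) with ha
  set b : ℤ := (n.choose (s + 2) : ℤ) with hb
  set c : ℤ := (n.choose (s + 3) : ℤ) with hc
  set d : ℤ := (n.choose (s + 4) : ℤ) with hd
  have ha0 : (0:ℤ) ≤ a := Int.natCast_nonneg _
  have h1' : b * ((s:ℤ) + 2) = a * P := by rw [ha, hb]; exact_mod_cast h1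
  have h2' : c * ((s:ℤ) + 3) = b * ((P:ℤ) - 1) := by
    have : (((P - 1 : ℕ)) : ℤ) = (P:ℤ) - 1 := by
      rw [Nat.cast_sub (by omega)]; norm_num
    rw [← this, hb, hc]; exact_mod_cast h2
  have h3' : d * ((s:ℤ) + 4) = c * ((P:ℤ) - 2) := by
    have : (((P - 2 : ℕ)) : ℤ) = (P:ℤ) - 2 := by
      rw [Nat.cast_sub (by omega)]; norm_num
    rw [← this, hc, hd]; exact_mod_cast h3
  have hPZ : (P:ℤ) = ((r:ℤ) + 3) * ((s:ℤ) + 2) := by rw [hPdef]; push_cast; ring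
  have hb' : b = ((r:ℤ) + 3) * a := by
    have hne : ((s:ℤ) + 2) ≠ 0 := by positivity
    apply mul_right_cancel₀ hne
    linear_combination h1' + a * hPZ
  have hc' : c * ((s:ℤ) + 3) = ((r:ℤ) + 3) * a * ((P:ℤ) - 1) := by
    linear_combination h2' + ((P:ℤ) - 1) * hb'
  have g3 : (6:ℤ) * ((r + 3).choose 3) = ((r:ℤ) + 3) * ((r:ℤ) + 2) * ((r:ℤ) + 1) := by
    exact_mod_cast congrArg (Nat.cast : ℕ → ℤ) (six_choose_three r)
  have g2 : (2:ℤ) * ((r + 2).choose 2) = ((r:ℤ) + 2) * ((r:ℤ) + 1) := by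
    exact_mod_cast congrArg (Nat.cast : ℕ → ℤ) (two_choose_two r)
  have hEexp : E (s + 1) (r + 3) 3 n =
      -((r + 3).choose 3 : ℤ) * a + ((r + 2).choose 2 : ℤ) * b - ((r:ℤ) + 1) * c + d := by
    simp only [E, Finset.sum_range_succ, Finset.sum_range_zero,
      show (3:ℕ) - 0 = 3 from rfl, show (3:ℕ) - 1 = 2 from rfl, show (3:ℕ) - 2 = 1 from rfl,
      show (3:ℕ) - 3 = 0 from rfl,
      show r + 3 - 0 = r + 3 from rfl, show r + 3 - 1 = r + 2 from by omega,
      show r + 3 - 2 = r + 1 from by omega, show r + 3 - 3 = r from by omega,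
      show s + 1 + 0 = s + 1 from rfl, show s + 1 + 1 = s + 2 from rfl,
      show s + 1 + 2 = s + 3 from rfl, show s + 1 + 3 = s + 4 from rfl,
      Nat.choose_one_right, Nat.choose_zero_right, ← ha, ← hb, ← hc, ← hd]
    push_cast
    ring
  have key : 6 * ((s:ℤ) + 3) * ((s:ℤ) + 4) * E (s + 1) (r + 3) 3 n =
      ((r:ℤ) + 3) * a * (2 * ((r:ℤ) + 2) * ((r:ℤ) + 1) * ((s:ℤ) + 3) * ((s:ℤ) + 4)
        - 6 * ((r:ℤ) + 1) * ((P:ℤ) - 1) * ((s:ℤ) + 4)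
        + 6 * ((P:ℤ) - 1) * ((P:ℤ) - 2)) := by
    rw [hEexp]
    linear_combination (6 * ((s:ℤ) + 3)) * h3'
      + (6 * ((P:ℤ) - 2) - 6 * ((r:ℤ) + 1) * ((s:ℤ) + 4)) * hc'
      + (3 * ((s:ℤ) + 3) * ((s:ℤ) + 4) * ((r:ℤ) + 2) * ((r:ℤ) + 1)) * hb'
      + (3 * ((s:ℤ) + 3) * ((s:ℤ) + 4) * b) * g2
      - (((s:ℤ) + 3) * ((s:ℤ) + 4) * a) * g3
  have hr0 : (0:ℤ) ≤ (r:ℤ) := Int.natCast_nonneg _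
  have hs0 : (0:ℤ) ≤ (s:ℤ) := Int.natCast_nonneg _
  have hQ : (0:ℤ) ≤ 2 * ((r:ℤ) + 2) * ((r:ℤ) + 1) * ((s:ℤ) + 3) * ((s:ℤ) + 4)
        - 6 * ((r:ℤ) + 1) * ((P:ℤ) - 1) * ((s:ℤ) + 4)
        + 6 * ((P:ℤ) - 1) * ((P:ℤ) - 2) := by
    rw [hPZ]
    have hexp : 2 * ((r:ℤ) + 2) * ((r:ℤ) + 1) * ((s:ℤ) + 3) * ((s:ℤ) + 4)
        - 6 * ((r:ℤ) + 1) * (((r:ℤ) + 3) * ((s:ℤ) + 2) - 1) * ((s:ℤ) + 4)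
        + 6 * (((r:ℤ) + 3) * ((s:ℤ) + 2) - 1) * (((r:ℤ) + 3) * ((s:ℤ) + 2) - 2)
        = 2*(r:ℤ)^2*(s:ℤ)^2 + 2*(r:ℤ)^2*(s:ℤ) + 18*(r:ℤ)*(s:ℤ)^2 + 30*(r:ℤ)*(s:ℤ)
          + 12*(r:ℤ) + 40*(s:ℤ)^2 + 88*(s:ℤ) + 48 := by ring
    rw [hexp]
    positivity
  have h6 : 6 * ((s:ℤ) + 3) * ((s:ℤ) + 4) * 0 ≤
      6 * ((s:ℤ) + 3) * ((s:ℤ) + 4) * E (s + 1) (r + 3) 3 n := by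
    rw [key, mul_zero]
    exact mul_nonneg (mul_nonneg (by positivity) ha0) hQ
  exact le_of_mul_le_mul_left h6 (by positivity)

/-- For `m ≥ 1` and `q ≥ 3`: `E(m,q,3,mq+m+q) ≥ 0`. -/
theorem stmt_17 (m q : ℕ) (hm : 1 ≤ m) (hq : 3 ≤ q) :
    0 ≤ E m q 3 (m * q + m + q) := by
  obtain ⟨s, rfl⟩ : ∃ s, m = s + 1 := ⟨m - 1, by omega⟩
  obtain ⟨r, rfl⟩ : ∃ r, q = r + 3 := ⟨q - 3, by omega⟩
  exact aux_stmt s r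
end
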